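/- arXiv:1806.07178 — 4 statements merged into one kernel-verified Lean document; each statement's English description precedes it below -/
import Mathlib

section
/- Let α₁, α₂ > 0 and μ₁₁, μ₂₂ ≥ 0. Define R₁(η) = log₂(1 + α₁η/(1+μ₁₁)) and R₂(η) = log₂(1 + α₂(1-η)/(1+μ₂₂)) for η ∈ [0,1]. Then R₁ is a strictly concave function of R₂ along the parametric curve; equivalently, the parametrically defined second derivative (R₁''R₂' − R₂''R₁')/(R₂')³ is strictly negative for all η ∈ (0,1). -/
/-!
Both rates are of the form `logb 2 (d + c η)` with `d + c η > 0`, whose first and second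
derivatives are `c / ((d + c η) log 2)` and `-c² / ((d + c η)² log 2)`. Writing `A`, `B` for the
two (positive) arguments and `c₁ > 0 > c₂` for the slopes, the numerator `R₁''R₂' - R₂''R₁'`
factors as `c₁ c₂ (c₂ / B - c₁ / A) / (A B log² 2)`, a product of two negative numbers, while
`(R₂')³` is negative.
-/

open Real Set

theorem hasDerivAt_const_add_mul {𝕜 : Type*} [NontriviallyNormedField 𝕜] (d c x : 𝕜) :
    HasDerivAt (fun x => d + c * x) c x := by
  simpa using ((hasDerivAt_id x).const_mul c).const_add d

namespace Real

variable {b d c x : ℝ}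

theorem hasDerivAt_logb_affine (h : d + c * x ≠ 0) :
    HasDerivAt (fun x => logb b (d + c * x)) (c / ((d + c * x) * log b)) x := by
  have hlog := ((hasDerivAt_const_add_mul d c x).log h).div_const (log b)
  rw [div_div] at hlog
  exact hlog

theorem deriv_logb_affine (h : d + c * x ≠ 0) :
    deriv (fun x => logb b (d + c * x)) x = c / ((d + c * x) * log b) :=
  (hasDerivAt_logb_affine h).deriv

theorem deriv_deriv_logb_affine (h : d + c * x ≠ 0) :
    deriv (deriv fun x => logb b (d + c * x)) x = -c ^ 2 / ((d + c * x) ^ 2 * log b) := by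
  have hderiv : deriv (fun x => logb b (d + c * x)) =ᶠ[nhds x]
      fun x => c / log b * (d + c * x)⁻¹ := by
    have hopen : IsOpen {x : ℝ | d + c * x ≠ 0} :=
      isOpen_ne_fun (by fun_prop) continuous_const
    filter_upwards [hopen.mem_nhds h] with y hy
    rw [deriv_logb_affine hy, div_eq_mul_inv, mul_inv]
    ring
  have hinv : HasDerivAt (fun x => (d + c * x)⁻¹) (-c / (d + c * x) ^ 2) x :=
    (hasDerivAt_const_add_mul d c x).inv h
  rw [hderiv.deriv_eq, (hinv.const_mul (c / log b)).deriv, mul_comm, div_mul_div_comm, neg_mul,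
    ← sq]

end Real

theorem logb_affine_parametric_second_deriv_neg {A B L c₁ c₂ : ℝ} (hA : 0 < A) (hB : 0 < B)
    (hL : 0 < L) (hc₁ : 0 < c₁) (hc₂ : c₂ < 0) :
    (-c₁ ^ 2 / (A ^ 2 * L) * (c₂ / (B * L)) - -c₂ ^ 2 / (B ^ 2 * L) * (c₁ / (A * L)))
      / (c₂ / (B * L)) ^ 3 < 0 := by
  have hnum : -c₁ ^ 2 / (A ^ 2 * L) * (c₂ / (B * L)) - -c₂ ^ 2 / (B ^ 2 * L) * (c₁ / (A * L))
      = c₁ * c₂ / (A * B * L ^ 2) * (c₂ / B - c₁ / A) := by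
    field_simp
    ring
  have hgap : c₂ / B - c₁ / A < 0 := by
    have := div_neg_of_neg_of_pos hc₂ hB
    have := div_pos hc₁ hA
    linarith
  have hslope : c₁ * c₂ / (A * B * L ^ 2) < 0 :=
    div_neg_of_neg_of_pos (mul_neg_of_pos_of_neg hc₁ hc₂) (by positivity)
  rw [hnum]
  exact div_neg_of_pos_of_neg (mul_pos_of_neg_of_neg hslope hgap)
    (Odd.pow_neg (by decide) (div_neg_of_neg_of_pos hc₂ (by positivity)))

theorem stmt_0 (α₁ α₂ μ₁₁ μ₂₂ : ℝ) (hα₁ : 0 < α₁) (hα₂ : 0 < α₂)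
    (hμ₁₁ : 0 ≤ μ₁₁) (hμ₂₂ : 0 ≤ μ₂₂)
    (R₁ R₂ : ℝ → ℝ)
    (hR₁ : ∀ η, R₁ η = Real.logb 2 (1 + α₁ * η / (1 + μ₁₁)))
    (hR₂ : ∀ η, R₂ η = Real.logb 2 (1 + α₂ * (1 - η) / (1 + μ₂₂))) :
    ∀ η ∈ Ioo (0:ℝ) 1,
      (deriv (deriv R₁) η * deriv R₂ η - deriv (deriv R₂) η * deriv R₁ η)
        / (deriv R₂ η) ^ 3 < 0 := by
  rintro η ⟨hη₀, hη₁⟩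
  set a := α₁ / (1 + μ₁₁)
  set b := α₂ / (1 + μ₂₂)
  have ha : 0 < a := div_pos hα₁ (by linarith)
  have hb : 0 < b := div_pos hα₂ (by linarith)
  have hR₁_affine : R₁ = fun x => logb 2 (1 + a * x) := by
    funext x
    rw [hR₁]
    congr 1
    simp only [a]
    ring
  have hR₂_affine : R₂ = fun x => logb 2 ((1 + b) + -b * x) := by
    funext x
    rw [hR₂]
    congr 1
    simp only [b]
    ring
  have hA : 0 < 1 + a * η := by positivity
  have hB : 0 < (1 + b) + -b * η := by nlinarith
  rw [hR₁_affine, hR₂_affine, deriv_deriv_logb_affine hA.ne', deriv_logb_affine hA.ne',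
    deriv_deriv_logb_affine hB.ne', deriv_logb_affine hB.ne']
  exact logb_affine_parametric_second_deriv_neg hA hB (log_pos one_lt_two) ha (neg_neg_of_pos hb)
end

section
/- Let α₁, α₂ > 0 and μ₁₁, μ₁₂ ≥ 0 with μ₁₂ > 0. Define R₁(η₂) = log₂(1 + α₁/(μ₁₁ + μ₁₂η₂ + 1)) and R₂(η₂) = log₂(1 + α₂η₂/(μ₁₁ + μ₁₂η₂ + 1)) for η₂ ∈ [0,1]. Then the parametric second derivative (R₁''R₂' − R₂''R₁')/(R₂')³ equals −[α₁μ₁₂(α₂(1+α₁+μ₁₁)+α₁μ₁₂)·(1+μ₁₁+μ₁₂η₂)·(1+μ₁₁+α₂η₂+μ₁₂η₂)] / [ζα₂²(1+μ₁₁)²(1+α₁+μ₁₁+μ₁₂η₂)²], where ζ = 1/ln 2, and hence is strictly negative for all η₂ ∈ [0,1]. -/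
/-!
On a neighbourhood of any `η₂ ∈ [0, 1]` both rates are differences of two logarithms of affine
functions sharing the denominator `B = 1 + μ₁₁ + μ₁₂ η₂`: with `A = B + α₁` and
`C = B + α₂ η₂`, `R₁ = logb 2 A - logb 2 B` and `R₂ = logb 2 C - logb 2 B`. The first two
derivatives of such a difference have closed forms, and substituting them into the parametric
second derivative collapses, after clearing denominators, to the stated rational function, whose
numerator and denominator are visibly positive.
-/

open Real Set Filter Topology

/-- The second derivative `d²f/dg²` of the curve `t ↦ (g t, f t)`. -/
noncomputable def parametricSecondDeriv (f g : ℝ → ℝ) (t : ℝ) : ℝ :=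
  (deriv (deriv f) t * deriv g t - deriv (deriv g) t * deriv f t) / deriv g t ^ 3

theorem parametricSecondDeriv_congr {f₁ f₂ g₁ g₂ : ℝ → ℝ} {t : ℝ}
    (hf : f₁ =ᶠ[𝓝 t] f₂) (hg : g₁ =ᶠ[𝓝 t] g₂) :
    parametricSecondDeriv f₁ g₁ t = parametricSecondDeriv f₂ g₂ t := by
  simp only [parametricSecondDeriv, hf.deriv.deriv_eq, hg.deriv.deriv_eq, hf.deriv_eq,
    hg.deriv_eq]

noncomputable def logbAffineDiff (a b a' b' x : ℝ) : ℝ :=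
  logb 2 (a + b * x) - logb 2 (a' + b' * x)

theorem hasDerivAt_affine (a b x : ℝ) : HasDerivAt (fun y => a + b * y) b x := by
  simpa using ((hasDerivAt_id x).const_mul b).const_add a

section logbAffineDiff

variable {a b a' b' x : ℝ}

theorem eventually_pos_affine (h : 0 < a + b * x) : ∀ᶠ y in 𝓝 x, 0 < a + b * y :=
  continuousAt_const.eventually_lt (by fun_prop) h

theorem hasDerivAt_logbAffineDiff (hP : 0 < a + b * x) (hQ : 0 < a' + b' * x) :
    HasDerivAt (logbAffineDiff a b a' b')
      ((b * a' - a * b') / ((a + b * x) * (a' + b' * x) * log 2)) x := by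
  have h : HasDerivAt (fun y => (log (a + b * y) - log (a' + b' * y)) / log 2)
      ((b / (a + b * x) - b' / (a' + b' * x)) / log 2) x :=
    (((hasDerivAt_affine a b x).log hP.ne').sub
      ((hasDerivAt_affine a' b' x).log hQ.ne')).div_const _
  convert h using 1
  · ext y; rw [logbAffineDiff, logb, logb, sub_div]
  · field_simp; ring

theorem deriv_logbAffineDiff_eventuallyEq (hP : 0 < a + b * x) (hQ : 0 < a' + b' * x) :
    deriv (logbAffineDiff a b a' b') =ᶠ[𝓝 x]
      fun y => (b * a' - a * b') / ((a + b * y) * (a' + b' * y) * log 2) := by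
  filter_upwards [eventually_pos_affine hP, eventually_pos_affine hQ] with y hPy hQy
  exact (hasDerivAt_logbAffineDiff hPy hQy).deriv

theorem deriv_deriv_logbAffineDiff (hP : 0 < a + b * x) (hQ : 0 < a' + b' * x) :
    deriv (deriv (logbAffineDiff a b a' b')) x =
      -((b * a' - a * b') * (b * (a' + b' * x) + b' * (a + b * x)))
        / ((a + b * x) ^ 2 * (a' + b' * x) ^ 2 * log 2) := by
  have hD : HasDerivAt (fun y => (a + b * y) * (a' + b' * y) * log 2)
      ((b * (a' + b' * x) + (a + b * x) * b') * log 2) x :=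
    ((hasDerivAt_affine a b x).mul (hasDerivAt_affine a' b' x)).mul_const (log 2)
  rw [(deriv_logbAffineDiff_eventuallyEq hP hQ).deriv_eq]
  refine ((hasDerivAt_const x (b * a' - a * b')).div hD (by positivity)).deriv.trans ?_
  field_simp
  ring

end logbAffineDiff

theorem logb_one_add_div {Q p : ℝ} (hQ : 0 < Q) (hQp : 0 < Q + p) :
    logb 2 (1 + p / Q) = logb 2 (Q + p) - logb 2 Q := by
  rw [← logb_div hQp.ne' hQ.ne']
  congr 1
  field_simp

theorem stmt_1 (α₁ α₂ μ₁₁ μ₁₂ ζ : ℝ) (hα₁ : 0 < α₁) (hα₂ : 0 < α₂)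
    (hμ₁₁ : 0 ≤ μ₁₁) (hμ₁₂ : 0 < μ₁₂) (hζ : ζ = 1 / Real.log 2)
    (R₁ R₂ : ℝ → ℝ)
    (hR₁ : ∀ η₂, R₁ η₂ = Real.logb 2 (1 + α₁ / (μ₁₁ + μ₁₂ * η₂ + 1)))
    (hR₂ : ∀ η₂, R₂ η₂ = Real.logb 2 (1 + α₂ * η₂ / (μ₁₁ + μ₁₂ * η₂ + 1))) :
    ∀ η₂ ∈ Icc (0:ℝ) 1,
      (deriv (deriv R₁) η₂ * deriv R₂ η₂ - deriv (deriv R₂) η₂ * deriv R₁ η₂)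
          / (deriv R₂ η₂) ^ 3
        = -(α₁ * μ₁₂ * (α₂ * (1 + α₁ + μ₁₁) + α₁ * μ₁₂)
              * (1 + μ₁₁ + μ₁₂ * η₂) * (1 + μ₁₁ + α₂ * η₂ + μ₁₂ * η₂))
            / (ζ * α₂ ^ 2 * (1 + μ₁₁) ^ 2 * (1 + α₁ + μ₁₁ + μ₁₂ * η₂) ^ 2)
      ∧ (deriv (deriv R₁) η₂ * deriv R₂ η₂ - deriv (deriv R₂) η₂ * deriv R₁ η₂)
          / (deriv R₂ η₂) ^ 3 < 0 := by
  rintro η ⟨hη₀, -⟩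
  have hB : 0 < 1 + μ₁₁ + μ₁₂ * η := by positivity
  have hA : 0 < 1 + μ₁₁ + α₁ + μ₁₂ * η := by positivity
  have hC : 0 < 1 + μ₁₁ + (α₂ + μ₁₂) * η := by positivity
  have h₁ : R₁ =ᶠ[𝓝 η] logbAffineDiff (1 + μ₁₁ + α₁) μ₁₂ (1 + μ₁₁) μ₁₂ := by
    filter_upwards [eventually_pos_affine hB] with y hy
    rw [hR₁, logbAffineDiff, logb_one_add_div (by linarith) (by linarith)]
    congr 2 <;> ring
  have h₂ : R₂ =ᶠ[𝓝 η] logbAffineDiff (1 + μ₁₁) (α₂ + μ₁₂) (1 + μ₁₁) μ₁₂ := by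
    filter_upwards [eventually_pos_affine hB, eventually_pos_affine hC] with y hyB hyC
    rw [hR₂, logbAffineDiff, logb_one_add_div (by linarith) (by linarith)]
    congr 2 <;> ring
  have key : parametricSecondDeriv R₁ R₂ η
      = -(α₁ * μ₁₂ * (α₂ * (1 + α₁ + μ₁₁) + α₁ * μ₁₂)
              * (1 + μ₁₁ + μ₁₂ * η) * (1 + μ₁₁ + α₂ * η + μ₁₂ * η))
            / (ζ * α₂ ^ 2 * (1 + μ₁₁) ^ 2 * (1 + α₁ + μ₁₁ + μ₁₂ * η) ^ 2) := by
    rw [parametricSecondDeriv_congr h₁ h₂, parametricSecondDeriv,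
      deriv_deriv_logbAffineDiff hA hB, deriv_deriv_logbAffineDiff hC hB,
      (hasDerivAt_logbAffineDiff hA hB).deriv, (hasDerivAt_logbAffineDiff hC hB).deriv, hζ]
    have hc : 1 + μ₁₁ ≠ 0 := by positivity
    field_simp [hA.ne', hB.ne', hC.ne', hα₂.ne', hc]
    ring
  refine ⟨key, lt_of_eq_of_lt key ?_⟩
  rw [neg_div, neg_lt_zero, hζ]
  positivity
end

section
/- Let α > 0 and μ ≥ 0. Define R₁(η) = log₂(1 + αη/(1 + μ(1−η))) and R₂(η) = log₂(1 + α(1−η)/(1 + μη)) for η ∈ [0,1]. Then the parametric second derivative (R₁''R₂' − R₂''R₁')/(R₂')³ is ≤ 0 for all η ∈ [0,1] if and only if α ≥ μ(2+μ). -/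
/-!
Clearing the fraction inside the logarithm, each rate is `Rᵢ = logb 2 (pᵢ / qᵢ)` with `pᵢ`, `qᵢ`
affine, so `Rᵢ' = Kᵢ / (Pᵢ log 2)` and `Rᵢ'' = -Kᵢ Pᵢ' / (Pᵢ² log 2)`, where `Pᵢ = pᵢ qᵢ` and `Kᵢ` is
the determinant of the coefficients of `pᵢ` and `qᵢ`. Substituting, the parametric second
derivative is a negative multiple of `P₁' P₂ - P₂' P₁`, which factors as
`(α - μ(2 + μ)) · ((1 + μ)(α + 2) - 2μ(α - μ)η(1 - η))`, and the second factor is positive on `[0, 1]`.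
-/

open Real Set Topology

-- Also true for `y = 0`, where both sides are `logb b 1 = logb b 0 = 0`.
theorem Real.logb_one_add_div (b x y : ℝ) : logb b (1 + x / y) = logb b ((y + x) / y) := by
  rcases eq_or_ne y 0 with rfl | hy
  · simp
  · rw [add_div, div_self hy]

theorem hasDerivAt_affine_s3 (c d t : ℝ) : HasDerivAt (fun s => c + d * s) d t := by
  simpa using ((hasDerivAt_id t).const_mul d).const_add c

section AffineRatio

variable {b p₀ p₁ q₀ q₁ t : ℝ}

theorem hasDerivAt_logb_div_affine (hp : p₀ + p₁ * t ≠ 0) (hq : q₀ + q₁ * t ≠ 0) :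
    HasDerivAt (fun s => logb b ((p₀ + p₁ * s) / (q₀ + q₁ * s)))
      ((p₁ * q₀ - p₀ * q₁) / ((p₀ + p₁ * t) * (q₀ + q₁ * t) * log b)) t := by
  have h := ((hasDerivAt_affine_s3 p₀ p₁ t).fun_div (hasDerivAt_affine_s3 q₀ q₁ t) hq).log
    (div_ne_zero hp hq)
  refine (h.div_const (log b)).congr_deriv ?_
  field_simp
  ring

theorem hasDerivAt_div_mul_affine (K L : ℝ) (hp : p₀ + p₁ * t ≠ 0) (hq : q₀ + q₁ * t ≠ 0) :
    HasDerivAt (fun s => K / ((p₀ + p₁ * s) * (q₀ + q₁ * s) * L))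
      (-K * (p₁ * (q₀ + q₁ * t) + (p₀ + p₁ * t) * q₁)
        / (((p₀ + p₁ * t) * (q₀ + q₁ * t)) ^ 2 * L)) t := by
  rcases eq_or_ne L 0 with rfl | hL
  · simpa using hasDerivAt_const t (0 : ℝ)
  have hPQ := ((hasDerivAt_affine_s3 p₀ p₁ t).fun_mul (hasDerivAt_affine_s3 q₀ q₁ t)).mul_const L
  refine ((hasDerivAt_const t K).fun_div hPQ (by simp [hp, hq, hL])).congr_deriv ?_
  field_simp
  ring

theorem deriv_deriv_logb_div_affine (hp : p₀ + p₁ * t ≠ 0) (hq : q₀ + q₁ * t ≠ 0) :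
    deriv (deriv fun s => logb b ((p₀ + p₁ * s) / (q₀ + q₁ * s))) t
      = -(p₁ * q₀ - p₀ * q₁) * (p₁ * (q₀ + q₁ * t) + (p₀ + p₁ * t) * q₁)
        / (((p₀ + p₁ * t) * (q₀ + q₁ * t)) ^ 2 * log b) := by
  have hne : ∀ᶠ s in 𝓝 t, p₀ + p₁ * s ≠ 0 ∧ q₀ + q₁ * s ≠ 0 :=
    ((hasDerivAt_affine_s3 p₀ p₁ t).continuousAt.eventually_ne hp).and
      ((hasDerivAt_affine_s3 q₀ q₁ t).continuousAt.eventually_ne hq)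
  have hderiv : (deriv fun s => logb b ((p₀ + p₁ * s) / (q₀ + q₁ * s))) =ᶠ[𝓝 t]
      fun s => (p₁ * q₀ - p₀ * q₁) / ((p₀ + p₁ * s) * (q₀ + q₁ * s) * log b) :=
    hne.mono fun s hs => (hasDerivAt_logb_div_affine hs.1 hs.2).deriv
  rw [hderiv.deriv_eq, (hasDerivAt_div_mul_affine _ _ hp hq).deriv]

end AffineRatio

theorem parametric_second_deriv_nonpos_iff {K₁ K₂ P₁ P₂ D₁ D₂ L Q c : ℝ} (hK₁ : 0 < K₁)
    (hK₂ : K₂ ≠ 0) (hP₁ : P₁ ≠ 0) (hP₂ : 0 < P₂) (hL : 0 < L)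
    (hD : D₁ * P₂ - D₂ * P₁ = c * Q) (hQ : 0 < Q) :
    (-K₁ * D₁ / (P₁ ^ 2 * L) * (K₂ / (P₂ * L)) - -K₂ * D₂ / (P₂ ^ 2 * L) * (K₁ / (P₁ * L)))
        / (K₂ / (P₂ * L)) ^ 3 ≤ 0 ↔ 0 ≤ c := by
  have h : (-K₁ * D₁ / (P₁ ^ 2 * L) * (K₂ / (P₂ * L)) - -K₂ * D₂ / (P₂ ^ 2 * L) * (K₁ / (P₁ * L)))
      / (K₂ / (P₂ * L)) ^ 3 = -(K₁ * L * P₂ / (K₂ ^ 2 * P₁ ^ 2) * (D₁ * P₂ - D₂ * P₁)) := by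
    field_simp
    ring
  rw [h, hD, neg_nonpos, mul_nonneg_iff_of_pos_left (by positivity),
    mul_nonneg_iff_of_pos_right hQ]

theorem curvature_factor_pos {α μ η : ℝ} (hα : 0 < α) (hμ : 0 ≤ μ) (hη : η ∈ Icc (0 : ℝ) 1) :
    0 < (1 + μ) * (α + 2) - 2 * μ * (α - μ) * (η * (1 - η)) := by
  obtain ⟨hη₀, hη₁⟩ := hη
  have hq : η * (1 - η) ≤ 1 / 4 := by nlinarith [sq_nonneg (2 * η - 1)]
  nlinarith [mul_le_mul_of_nonneg_left hq (by positivity : (0:ℝ) ≤ 2 * μ * α),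
    mul_nonneg (by positivity : (0:ℝ) ≤ 2 * μ ^ 2) (mul_nonneg hη₀ (sub_nonneg.2 hη₁)),
    mul_nonneg hμ hα.le]

theorem rate_second_deriv_nonpos_iff {α μ : ℝ} (hα : 0 < α) (hμ : 0 ≤ μ) {R₁ R₂ : ℝ → ℝ}
    (hR₁ : ∀ η, R₁ η = logb 2 (1 + α * η / (1 + μ * (1 - η))))
    (hR₂ : ∀ η, R₂ η = logb 2 (1 + α * (1 - η) / (1 + μ * η))) {η : ℝ} (hη : η ∈ Icc (0 : ℝ) 1) :
    (deriv (deriv R₁) η * deriv R₂ η - deriv (deriv R₂) η * deriv R₁ η) / (deriv R₂ η) ^ 3 ≤ 0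
      ↔ μ * (2 + μ) ≤ α := by
  have hR₁' : R₁ = fun s => logb 2 (((1 + μ) + (α - μ) * s) / ((1 + μ) + -μ * s)) := by
    ext s; rw [hR₁, Real.logb_one_add_div]; congr 2 <;> ring
  have hR₂' : R₂ = fun s => logb 2 (((1 + α) + (μ - α) * s) / (1 + μ * s)) := by
    ext s; rw [hR₂, Real.logb_one_add_div]; congr 2; ring
  have ⟨hη₀, hη₁⟩ := hη
  have hp₁ : 0 < (1 + μ) + (α - μ) * η := by nlinarith
  have hq₁ : 0 < (1 + μ) + -μ * η := by nlinarith
  have hp₂ : 0 < (1 + α) + (μ - α) * η := by nlinarith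
  have hq₂ : 0 < 1 + μ * η := by nlinarith
  subst hR₁' hR₂'
  rw [deriv_deriv_logb_div_affine hp₁.ne' hq₁.ne', deriv_deriv_logb_div_affine hp₂.ne' hq₂.ne',
    (hasDerivAt_logb_div_affine hp₁.ne' hq₁.ne').deriv,
    (hasDerivAt_logb_div_affine hp₂.ne' hq₂.ne').deriv]
  refine (parametric_second_deriv_nonpos_iff ?_ ?_ (by positivity) (by positivity)
    (log_pos one_lt_two) ?_ (curvature_factor_pos hα hμ hη)).trans sub_nonneg
  -- the determinants are `α (1 + μ)` and `-α (1 + μ)`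
  · nlinarith
  · refine ne_of_lt ?_
    nlinarith
  · ring

theorem stmt_3 (α μ : ℝ) (hα : 0 < α) (hμ : 0 ≤ μ)
    (R₁ R₂ : ℝ → ℝ)
    (hR₁ : ∀ η, R₁ η = Real.logb 2 (1 + α * η / (1 + μ * (1 - η))))
    (hR₂ : ∀ η, R₂ η = Real.logb 2 (1 + α * (1 - η) / (1 + μ * η))) :
    (∀ η ∈ Icc (0:ℝ) 1,
        (deriv (deriv R₁) η * deriv R₂ η - deriv (deriv R₂) η * deriv R₁ η)
          / (deriv R₂ η) ^ 3 ≤ 0)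
      ↔ α ≥ μ * (2 + μ) :=
  ⟨fun h => (rate_second_deriv_nonpos_iff hα hμ hR₁ hR₂ ⟨le_rfl, zero_le_one⟩).1
      (h 0 ⟨le_rfl, zero_le_one⟩),
    fun h _ hη => (rate_second_deriv_nonpos_iff hα hμ hR₁ hR₂ hη).2 h⟩
end

section
/- Let α > 0 and μ ≥ 0 with α ≥ μ(2+μ). Then for R₁(η) = log₂(1 + αη/(1+μ(1−η))) and R₂(η) = log₂(1 + α(1−η)/(1+μη)) on [0,1], the map from R₂(η) ∈ [0, log₂(1+α)] to R₁(η) is concave; i.e., the downlink LoS two-user rate region with equal gains is convex. -/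
open Real Set

/-!
Put `s = 2 ^ R₂(η) ∈ [1, 1 + α]` and `c = μ (2 + μ)`. Solving for `η` and substituting gives
`2 ^ R₁(η) = (α (2 + α) - c - (α - c) s) / (α - c + c s)`, so in the variable `u = log₂ s` the
boundary is `log₂ (α (2 + α) - c - (α - c) 2 ^ u) - log₂ (α - c + c 2 ^ u)`. The hypothesis
`α ≥ c` makes both coefficients `α - c` and `c` nonnegative: then the first term is the logarithm
of a positive concave function, and the second is convex since its derivative
`c 2 ^ u log 2 / (α - c + c 2 ^ u)` increases with `u`.
-/

theorem concaveOn_log_sub_mul_rpow {a b c : ℝ} {s : Set ℝ} (hc : 0 < c) (hb : 0 ≤ b)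
    (hs : Convex ℝ s) (hpos : ∀ u ∈ s, 0 < a - b * c ^ u) :
    ConcaveOn ℝ s fun u => log (a - b * c ^ u) := by
  have hlin : ConcaveOn ℝ s fun u => a - b * c ^ u :=
    (concaveOn_const a hs).sub (((convexOn_rpow_left hc).subset (subset_univ s) hs).smul hb)
  refine ⟨hs, fun x hx y hy p q hp hq hpq => ?_⟩
  have hmix : 0 < p • (a - b * c ^ x) + q • (a - b * c ^ y) :=
    convex_Ioi (0:ℝ) (hpos x hx) (hpos y hy) hp hq hpq
  calc p • log (a - b * c ^ x) + q • log (a - b * c ^ y)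
      ≤ log (p • (a - b * c ^ x) + q • (a - b * c ^ y)) :=
        strictConcaveOn_log_Ioi.concaveOn.2 (hpos x hx) (hpos y hy) hp hq hpq
    _ ≤ log (a - b * c ^ (p • x + q • y)) := log_le_log hmix (hlin.2 hx hy hp hq hpq)

theorem convexOn_log_add_mul_rpow {a b c : ℝ} (hc : 1 ≤ c) (ha : 0 ≤ a) (hb : 0 ≤ b) :
    ConvexOn ℝ univ fun u : ℝ => log (a + b * c ^ u) := by
  rcases hb.eq_or_lt with rfl | hb
  · simpa using convexOn_const (log a) convex_univ
  have hpos : ∀ u : ℝ, 0 < a + b * c ^ u := fun u => by positivity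
  have hderiv : ∀ u, HasDerivAt (fun u : ℝ => log (a + b * c ^ u))
      (b * (c ^ u * log c) / (a + b * c ^ u)) u := fun u =>
    (((hasStrictDerivAt_const_rpow (by linarith) u).hasDerivAt.const_mul b).const_add a).log
      (hpos u).ne'
  refine Monotone.convexOn_univ_of_deriv (fun u => (hderiv u).differentiableAt) fun x y hxy => ?_
  simp only [(hderiv _).deriv]
  rw [div_le_div_iff₀ (hpos x) (hpos y)]
  have := mul_le_mul_of_nonneg_left (rpow_le_rpow_of_exponent_le hc hxy)
    (mul_nonneg (mul_nonneg ha hb.le) (log_nonneg hc))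
  nlinarith

theorem exists_power_split {α μ s : ℝ} (hα : 0 < α) (hμ : 0 ≤ μ) (hs₁ : 1 ≤ s)
    (hs₂ : s ≤ 1 + α) :
    ∃ η ∈ Icc (0:ℝ) 1, 1 + α * (1 - η) / (1 + μ * η) = s ∧
      1 + α * η / (1 + μ * (1 - η)) =
        (α * (2 + α) - μ * (2 + μ) - (α - μ * (2 + μ)) * s) /
          (α - μ * (2 + μ) + μ * (2 + μ) * s) := by
  set d := α + μ * (s - 1)
  have hd : 0 < d := by nlinarith
  have hden : α - μ * (2 + μ) + μ * (2 + μ) * s ≠ 0 := by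
    nlinarith [mul_nonneg (mul_nonneg hμ (by linarith : (0:ℝ) ≤ 2 + μ)) (sub_nonneg.2 hs₁)]
  have h₁ : 1 - (1 + α - s) / d = (1 + μ) * (s - 1) / d := by field_simp; ring
  have h₂ : 1 + μ * ((1 + α - s) / d) = α * (1 + μ) / d := by field_simp; ring
  have h₃ : 1 + μ * (1 - (1 + α - s) / d) = (α - μ * (2 + μ) + μ * (2 + μ) * s) / d := by
    rw [h₁]; field_simp; ring
  refine ⟨(1 + α - s) / d, ⟨by positivity, ?_⟩, ?_, ?_⟩
  · rw [div_le_one hd]; nlinarith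
  · rw [h₁, h₂]; field_simp; ring
  · rw [h₃, ← mul_div_assoc, div_div_div_cancel_right₀ hd.ne', one_add_div hden]
    congr 1; ring

theorem stmt_13 (α μ : ℝ) (hα : 0 < α) (hμ : 0 ≤ μ) (hcond : α ≥ μ * (2 + μ))
    (R₁ R₂ : ℝ → ℝ)
    (hR₁ : ∀ η, R₁ η = Real.logb 2 (1 + α * η / (1 + μ * (1 - η))))
    (hR₂ : ∀ η, R₂ η = Real.logb 2 (1 + α * (1 - η) / (1 + μ * η))) :
    ∀ F : ℝ → ℝ, (∀ η ∈ Icc (0:ℝ) 1, F (R₂ η) = R₁ η) →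
      ConcaveOn ℝ (Icc (0:ℝ) (Real.logb 2 (1 + α))) F := by
  intro F hF
  set c := μ * (2 + μ) with hc_def
  have hc : 0 ≤ c := by positivity
  have hs : ∀ u ∈ Icc (0:ℝ) (logb 2 (1 + α)), 1 ≤ (2:ℝ) ^ u ∧ (2:ℝ) ^ u ≤ 1 + α := fun u hu =>
    ⟨one_le_rpow one_le_two hu.1, (rpow_le_rpow_of_exponent_le one_le_two hu.2).trans_eq
      (rpow_logb two_pos (by norm_num) (by linarith))⟩
  have hnum : ∀ u ∈ Icc (0:ℝ) (logb 2 (1 + α)), 0 < α * (2 + α) - c - (α - c) * 2 ^ u :=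
    fun u hu => by nlinarith [hs u hu]
  have hden : ∀ u ∈ Icc (0:ℝ) (logb 2 (1 + α)), 0 < α - c + c * 2 ^ u :=
    fun u hu => by nlinarith [hs u hu]
  refine (((concaveOn_log_sub_mul_rpow two_pos (sub_nonneg.2 hcond) (convex_Icc _ _) hnum).sub
    ((convexOn_log_add_mul_rpow one_le_two (sub_nonneg.2 hcond) hc).subset (subset_univ _)
      (convex_Icc _ _))).smul (inv_nonneg.2 (log_nonneg one_le_two))).congr fun u hu => ?_
  obtain ⟨η, hη, h₂, h₁⟩ := exists_power_split hα hμ (hs u hu).1 (hs u hu).2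
  have hFu : F u = R₁ η := by
    rw [← hF η hη, hR₂, h₂, logb_rpow two_pos (by norm_num)]
  rw [← hc_def] at h₁
  rw [hFu, hR₁, h₁, logb, log_div (hnum u hu).ne' (hden u hu).ne']
  simp only [Pi.sub_apply, smul_eq_mul]
  ring
end
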